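/- Let U be a utility function on subsets of a finite set S of size n, and suppose the marginal contribution of element i to a coalition T (with i ∉ T) has the form U(T ∪ {i}) - U(T) = c_i + ⟨h_i, Σ_{k∈T} h_k⟩ for fixed scalars c_i and vectors h_i, h_k ∈ ℝ^m. Then the Shapley value of i equals φ_i = c_i + (1/2)⟨h_i, Σ_{k∈S, k≠i} h_k⟩. -/

import Mathlib

/-!
Write `g k = ⟪h i, h k⟫` and let `A = S \ {i}`, `n = |A|`. The Shapley weights
`1 / C(n, |T|)` sum to `n + 1` over `T ⊆ A` and are unchanged under `T ↦ A \ T`. Averaging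
`∑ k ∈ T, g k` with the complementary sum `∑ k ∈ A \ T, g k` therefore shows that the weighted
sum of `∑ k ∈ T, g k` is `(n + 1) / 2 · ∑ k ∈ A, g k`, which gives the factor `1 / 2`.
-/

open scoped RealInnerProductSpace

open Finset

theorem sum_powerset_sdiff {ι M : Type*} [DecidableEq ι] [AddCommMonoid M] (A : Finset ι)
    (f : Finset ι → M) :
    ∑ T ∈ A.powerset, f (A \ T) = ∑ T ∈ A.powerset, f T :=
  sum_nbij' (A \ ·) (A \ ·) (fun _ _ => by simp) (fun _ _ => by simp)
    (fun _ hT => Finset.sdiff_sdiff_eq_self (mem_powerset.1 hT))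
    (fun _ hT => Finset.sdiff_sdiff_eq_self (mem_powerset.1 hT)) (fun _ _ => rfl)

theorem two_mul_sum_powerset_mul_sum_of_symm {ι R : Type*} [DecidableEq ι] [CommSemiring R]
    (A : Finset ι) (w : ℕ → R) (hw : ∀ t ≤ A.card, w (A.card - t) = w t) (g : ι → R) :
    2 * ∑ T ∈ A.powerset, w T.card * ∑ k ∈ T, g k
      = (∑ T ∈ A.powerset, w T.card) * ∑ k ∈ A, g k := by
  have hcompl : ∑ T ∈ A.powerset, w T.card * ∑ k ∈ T, g k
      = ∑ T ∈ A.powerset, w T.card * ∑ k ∈ A \ T, g k := by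
    rw [← sum_powerset_sdiff A]
    refine sum_congr rfl fun T hT => ?_
    rw [card_sdiff_of_subset (mem_powerset.1 hT), hw _ (card_le_card (mem_powerset.1 hT))]
  calc 2 * ∑ T ∈ A.powerset, w T.card * ∑ k ∈ T, g k
      = ∑ T ∈ A.powerset, w T.card * (∑ k ∈ A \ T, g k + ∑ k ∈ T, g k) := by
        rw [two_mul]
        nth_rw 1 [hcompl]
        simp only [mul_add, sum_add_distrib]
    _ = (∑ T ∈ A.powerset, w T.card) * ∑ k ∈ A, g k := by
        rw [sum_mul]
        exact sum_congr rfl fun T hT => by rw [sum_sdiff (mem_powerset.1 hT)]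

theorem sum_powerset_one_div_choose_card {ι : Type*} (A : Finset ι) :
    ∑ T ∈ A.powerset, (1 / (A.card.choose T.card : ℝ)) = A.card + 1 := by
  rw [sum_powerset_apply_card fun t => 1 / (A.card.choose t : ℝ)]
  have hone : ∀ t ∈ range (A.card + 1), A.card.choose t • (1 / (A.card.choose t : ℝ)) = 1 :=
    fun t ht => by
      rw [nsmul_eq_mul, mul_one_div_cancel]
      exact_mod_cast (Nat.choose_pos (Nat.lt_succ_iff.1 (mem_range.1 ht))).ne'
  rw [sum_congr rfl hone]
  simp

/-- `A` plays the role of the other players, so `A.card + 1` is the number of players. -/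
theorem shapley_of_marginal_eq_add_sum {ι : Type*} [DecidableEq ι] (A : Finset ι) (c : ℝ)
    (g : ι → ℝ) :
    (1 / (A.card + 1 : ℝ)) * ∑ T ∈ A.powerset,
        (1 / (A.card.choose T.card : ℝ)) * (c + ∑ k ∈ T, g k)
      = c + (1 / 2) * ∑ k ∈ A, g k := by
  have hcross := two_mul_sum_powerset_mul_sum_of_symm A (fun t => 1 / (A.card.choose t : ℝ))
    (fun t ht => by simp only [Nat.choose_symm ht]) g
  simp only [sum_powerset_one_div_choose_card] at hcross
  simp only [mul_add, sum_add_distrib, ← sum_mul, sum_powerset_one_div_choose_card]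
  generalize ∑ T ∈ A.powerset, 1 / (A.card.choose T.card : ℝ) * ∑ k ∈ T, g k = X at hcross ⊢
  field_simp
  linear_combination hcross

theorem stmt_11 {ι : Type*} [DecidableEq ι] {m : ℕ}
    (S : Finset ι) (i : ι) (hi : i ∈ S)
    (U : Finset ι → ℝ) (c : ℝ) (h : ι → EuclideanSpace ℝ (Fin m))
    (hU : ∀ T ⊆ S.erase i, U (insert i T) - U T = c + ⟪h i, ∑ k ∈ T, h k⟫) :
    (1 / (S.card : ℝ)) * ∑ T ∈ (S.erase i).powerset,
        (1 / ((S.card - 1).choose T.card : ℝ)) * (U (insert i T) - U T)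
      = c + (1 / 2) * ⟪h i, ∑ k ∈ S.erase i, h k⟫ := by
  have hcard : (S.card : ℝ) = (S.erase i).card + 1 := by
    exact_mod_cast (card_erase_add_one hi).symm
  rw [hcard, ← card_erase_of_mem hi, inner_sum,
    ← shapley_of_marginal_eq_add_sum (S.erase i) c (fun k => ⟪h i, h k⟫)]
  congr 1
  refine sum_congr rfl fun T hT => ?_
  rw [hU T (mem_powerset.1 hT), inner_sum]
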